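/- arXiv:1009.2850 — 5 statements merged into one kernel-verified Lean document; each statement's English description precedes it below -/
import Mathlib

section
/- Let Q be a unital complex *-algebra with coproduct Δ, let C ∈ Mₙ(ℂ) be a unitary matrix, and let T'₁,…,T'ₙ be 3×3 matrices with entries in Q satisfying Δ((T'ₘ)_{jl}) = Σ_k (T'ₘ)_{jk} ⊗ (T'ₘ)_{kl}. Define X_{r,s,j,k} := Σ_{m=1}ⁿ C_{rm} (conj C_{sm}) (T'ₘ)_{j,k} for r,s = 1,…,n and j,k = 1,2,3. Then Δ(X_{r,s,j,k}) = Σ_{l=1}³ Σ_{p=1}ⁿ X_{r,p,j,l} ⊗ X_{p,s,l,k}. Consequently, the two-sided ideal I generated by the elements X_{r,s,j,k} with r ≠ s satisfies Δ(I) ⊆ I ⊗ Q + Q ⊗ I (indeed Δ(I) ⊆ span of I ⊗ I terms plus diagonal terms which again lie in I⊗Q + Q⊗I). -/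
/-!
Writing `X_{rs} = (C · diag(T'ₘ) · Cᴴ)_{rs}`, the coproduct formula is the corepresentation
property of each `T'ₘ`, conjugated by `C`: in `Σ_p X_{rp} ⊗ X_{ps}` the inner sum over `p` is
the orthogonality relation `Σ_p conj(C_{pm}) C_{pm'} = δ_{mm'}`, which kills the cross terms
`m ≠ m'`. For `r ≠ s`, each summand `X_{rp} ⊗ X_{ps}` has an off-diagonal factor, on the left
if `p ≠ r` and on the right if `p = r`, so `Δ` maps the generators of `I` into
`I ⊗ Q + Q ⊗ I`. That subspace is a left ideal of `Q ⊗ Q` and `Δ` is multiplicative, so `Δ(I)`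
lies in it too.
-/

open TensorProduct

section ConjDiagonal

variable {ι R M N : Type*} [Fintype ι] [CommSemiring R] [Star R]
  [AddCommMonoid M] [Module R M] [AddCommMonoid N] [Module R N]

/-- The `(r, s)` entry of `C · diagonal x · Cᴴ`, for a vector `x` with entries in a module. -/
def conjDiagonal (C : Matrix ι ι R) (x : ι → M) (r s : ι) : M :=
  ∑ m, (C r m * star (C s m)) • x m

theorem map_conjDiagonal (f : M →ₗ[R] N) (C : Matrix ι ι R) (x : ι → M) (r s : ι) :
    f (conjDiagonal C x r s) = conjDiagonal C (fun m => f (x m)) r s := by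
  simp only [conjDiagonal, map_sum, map_smul]

theorem conjDiagonal_sum {κ : Type*} (t : Finset κ) (C : Matrix ι ι R) (x : κ → ι → M)
    (r s : ι) :
    conjDiagonal C (fun m => ∑ l ∈ t, x l m) r s = ∑ l ∈ t, conjDiagonal C (x l) r s := by
  simp only [conjDiagonal, Finset.smul_sum]
  exact Finset.sum_comm

theorem sum_conjDiagonal_tmul_conjDiagonal [DecidableEq ι] {C : Matrix ι ι R}
    (hC : C.conjTranspose * C = 1) (x : ι → M) (y : ι → N) (r s : ι) :
    ∑ p, conjDiagonal C x r p ⊗ₜ[R] conjDiagonal C y p s =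
      conjDiagonal C (fun m => x m ⊗ₜ[R] y m) r s := by
  have orthogonal : ∀ m m', ∑ p, star (C p m) * C p m' = if m = m' then 1 else 0 := fun m m' => by
    simpa [Matrix.mul_apply, Matrix.one_apply] using congrFun (congrFun hC m) m'
  calc ∑ p, conjDiagonal C x r p ⊗ₜ[R] conjDiagonal C y p s
      = ∑ p, ∑ m', ∑ m, (star (C p m) * C p m' * (C r m * star (C s m'))) • (x m ⊗ₜ y m') := by
        simp only [conjDiagonal, sum_tmul, tmul_sum, smul_tmul_smul]
        refine Finset.sum_congr rfl fun p _ => Finset.sum_congr rfl fun m' _ =>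
          Finset.sum_congr rfl fun m _ => ?_
        ring_nf
    _ = ∑ m, ∑ m', ∑ p, (star (C p m) * C p m' * (C r m * star (C s m'))) • (x m ⊗ₜ y m') := by
        rw [Finset.sum_comm_cycle]
        exact Finset.sum_congr rfl fun m _ => Finset.sum_comm
    _ = ∑ m, ∑ m', (if m = m' then C r m * star (C s m') else 0) • (x m ⊗ₜ y m') := by
        simp only [← Finset.sum_smul, ← Finset.sum_mul, orthogonal, ite_mul, one_mul, zero_mul]
    _ = conjDiagonal C (fun m => x m ⊗ₜ[R] y m) r s := by
        simp [conjDiagonal]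

theorem map_conjDiagonal_of_corep [DecidableEq ι] {κ : Type*} [Fintype κ] {C : Matrix ι ι R}
    (hC : C.conjTranspose * C = 1) (Δ : M →ₗ[R] M ⊗[R] M) (T : ι → Matrix κ κ M)
    (hT : ∀ m j l, Δ (T m j l) = ∑ k, T m j k ⊗ₜ[R] T m k l) (r s : ι) (j k : κ) :
    Δ (conjDiagonal C (fun m => T m j k) r s) =
      ∑ l, ∑ p, conjDiagonal C (fun m => T m j l) r p ⊗ₜ[R]
        conjDiagonal C (fun m => T m l k) p s := by
  simp only [map_conjDiagonal, hT, conjDiagonal_sum, sum_conjDiagonal_tmul_conjDiagonal hC]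

end ConjDiagonal

section LeftIdeal

variable {R A B : Type*} [CommSemiring R] [Semiring A] [Semiring B] [Algebra R A] [Algebra R B]

theorem tmul_mem_range_map_subtype_id {I : Ideal A} {a : A} (ha : a ∈ I) (b : B) :
    a ⊗ₜ[R] b ∈ LinearMap.range (map (I.restrictScalars R).subtype (LinearMap.id (M := B))) :=
  ⟨(⟨a, ha⟩ : I.restrictScalars R) ⊗ₜ b, rfl⟩

theorem tmul_mem_range_map_id_subtype {J : Ideal B} (a : A) {b : B} (hb : b ∈ J) :
    a ⊗ₜ[R] b ∈ LinearMap.range (map (LinearMap.id (M := A)) (J.restrictScalars R).subtype) :=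
  ⟨a ⊗ₜ (⟨b, hb⟩ : J.restrictScalars R), rfl⟩

theorem mul_mem_range_map_subtype_id (I : Ideal A) (z : A ⊗[R] B) {y : A ⊗[R] B}
    (hy : y ∈ LinearMap.range (map (I.restrictScalars R).subtype (LinearMap.id (M := B)))) :
    z * y ∈ LinearMap.range (map (I.restrictScalars R).subtype (LinearMap.id (M := B))) := by
  obtain ⟨t, rfl⟩ := hy
  induction t using TensorProduct.induction_on with
  | zero => simp
  | add t t' ht ht' => rw [map_add, mul_add]; exact add_mem ht ht'
  | tmul a b =>
    induction z using TensorProduct.induction_on with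
    | zero => simp
    | add z z' hz hz' => rw [add_mul]; exact add_mem hz hz'
    | tmul c d =>
      rw [map_tmul, Algebra.TensorProduct.tmul_mul_tmul]
      exact tmul_mem_range_map_subtype_id (I.mul_mem_left c a.2) _

theorem mul_mem_range_map_id_subtype (J : Ideal B) (z : A ⊗[R] B) {y : A ⊗[R] B}
    (hy : y ∈ LinearMap.range (map (LinearMap.id (M := A)) (J.restrictScalars R).subtype)) :
    z * y ∈ LinearMap.range (map (LinearMap.id (M := A)) (J.restrictScalars R).subtype) := by
  obtain ⟨t, rfl⟩ := hy
  induction t using TensorProduct.induction_on with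
  | zero => simp
  | add t t' ht ht' => rw [map_add, mul_add]; exact add_mem ht ht'
  | tmul a b =>
    induction z using TensorProduct.induction_on with
    | zero => simp
    | add z z' hz hz' => rw [add_mul]; exact add_mem hz hz'
    | tmul c d =>
      rw [map_tmul, Algebra.TensorProduct.tmul_mul_tmul]
      exact tmul_mem_range_map_id_subtype _ (J.mul_mem_left d b.2)

theorem Submodule.mul_mem_sup_of_mul_mem {S T : Submodule R B} (hS : ∀ z y, y ∈ S → z * y ∈ S)
    (hT : ∀ z y, y ∈ T → z * y ∈ T) (z : B) {y : B} (hy : y ∈ S ⊔ T) : z * y ∈ S ⊔ T := by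
  obtain ⟨y₁, hy₁, y₂, hy₂, rfl⟩ := Submodule.mem_sup.1 hy
  rw [mul_add]
  exact add_mem (Submodule.mem_sup_left (hS z y₁ hy₁)) (Submodule.mem_sup_right (hT z y₂ hy₂))

end LeftIdeal

theorem apply_mem_of_mem_span {A B : Type*} [Semiring A] [Semiring B] (f : A →+* B)
    {S : AddSubmonoid B} (hS : ∀ z y, y ∈ S → z * y ∈ S) {s : Set A} (hs : ∀ x ∈ s, f x ∈ S)
    {q : A} (hq : q ∈ Ideal.span s) : f q ∈ S := by
  induction hq using Submodule.span_induction with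
  | mem x hx => exact hs x hx
  | zero => simp
  | add x y _ _ hx hy => rw [map_add]; exact add_mem hx hy
  | smul a x _ hx => rw [smul_eq_mul, map_mul]; exact hS _ _ hx

theorem ckm_ideal_coproduct_general {n : ℕ} {Q : Type*} [Ring Q]
    [Algebra ℂ Q]
    (Δ : Q →ₐ[ℂ] Q ⊗[ℂ] Q)
    (C : Matrix (Fin n) (Fin n) ℂ)
    (hC2 : C.conjTranspose * C = 1)
    (T : Fin n → Matrix (Fin 3) (Fin 3) Q)
    (hT : ∀ m j l, Δ (T m j l) = ∑ k, T m j k ⊗ₜ[ℂ] T m k l)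
    (X : Fin n → Fin n → Fin 3 → Fin 3 → Q)
    (hX : ∀ r s j k, X r s j k = ∑ m, (C r m * star (C s m)) • T m j k)
    (I : Ideal Q) (hI : I = Ideal.span {x | ∃ r s j k, r ≠ s ∧ x = X r s j k}) :
    (∀ r s j k, Δ (X r s j k) = ∑ l, ∑ p, X r p j l ⊗ₜ[ℂ] X p s l k) ∧
    (∀ q ∈ I, Δ q ∈
      LinearMap.range (TensorProduct.map (Submodule.subtype (I.restrictScalars ℂ))
          (LinearMap.id (R := ℂ) (M := Q))) ⊔
      LinearMap.range (TensorProduct.map (LinearMap.id (R := ℂ) (M := Q))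
          (Submodule.subtype (I.restrictScalars ℂ)))) := by
  obtain rfl : X = fun r s j k => conjDiagonal C (fun m => T m j k) r s := by
    funext r s j k; exact hX r s j k
  have coproduct := map_conjDiagonal_of_corep hC2 Δ.toLinearMap T hT
  refine ⟨coproduct, fun q hq => ?_⟩
  have off_diagonal_mem : ∀ r s j k, r ≠ s → conjDiagonal C (fun m => T m j k) r s ∈ I :=
    fun r s j k hrs => hI ▸ Ideal.subset_span ⟨r, s, j, k, hrs, rfl⟩
  refine apply_mem_of_mem_span (Δ : Q →+* Q ⊗[ℂ] Q)
    (Submodule.mul_mem_sup_of_mul_mem (mul_mem_range_map_subtype_id I)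
      (mul_mem_range_map_id_subtype I)) ?_ (hI ▸ hq)
  rintro _ ⟨r, s, j, k, hrs, rfl⟩
  refine (coproduct r s j k).symm ▸ Submodule.sum_mem _ fun l _ =>
    Submodule.sum_mem _ fun p _ => ?_
  rcases eq_or_ne r p with rfl | hrp
  · exact Submodule.mem_sup_right (tmul_mem_range_map_id_subtype _ (off_diagonal_mem r s l k hrs))
  · exact Submodule.mem_sup_left (tmul_mem_range_map_subtype_id (off_diagonal_mem r p j l hrp) _)

/-- With `C` a unitary `n×n` complex matrix and `T'ₘ` corepresentation-like `3×3`
matrices over `Q`, the elements `X_{r,s,j,k} := Σₘ C_{rm} conj(C_{sm}) (T'ₘ)_{jk}`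
satisfy `Δ(X_{r,s,j,k}) = Σ_{l,p} X_{r,p,j,l} ⊗ X_{p,s,l,k}`, and the ideal generated
by the `X_{r,s,j,k}` with `r ≠ s` satisfies `Δ(I) ⊆ I ⊗ Q + Q ⊗ I`. -/
theorem ckm_ideal_coproduct {n : ℕ} {Q : Type*} [Ring Q] [StarRing Q]
    [Algebra ℂ Q] [StarModule ℂ Q]
    (Δ : Q →ₐ[ℂ] Q ⊗[ℂ] Q)
    (C : Matrix (Fin n) (Fin n) ℂ)
    (hC1 : C * C.conjTranspose = 1) (hC2 : C.conjTranspose * C = 1)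
    (T : Fin n → Matrix (Fin 3) (Fin 3) Q)
    (hT : ∀ m j l, Δ (T m j l) = ∑ k, T m j k ⊗ₜ[ℂ] T m k l)
    (X : Fin n → Fin n → Fin 3 → Fin 3 → Q)
    (hX : ∀ r s j k, X r s j k = ∑ m, (C r m * star (C s m)) • T m j k)
    (I : Ideal Q) (hI : I = Ideal.span {x | ∃ r s j k, r ≠ s ∧ x = X r s j k}) :
    (∀ r s j k, Δ (X r s j k) = ∑ l, ∑ p, X r p j l ⊗ₜ[ℂ] X p s l k) ∧
    (∀ q ∈ I, Δ q ∈
      LinearMap.range (TensorProduct.map (Submodule.subtype (I.restrictScalars ℂ))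
          (LinearMap.id (R := ℂ) (M := Q))) ⊔
      LinearMap.range (TensorProduct.map (LinearMap.id (R := ℂ) (M := Q))
          (Submodule.subtype (I.restrictScalars ℂ)))) :=
  ckm_ideal_coproduct_general Δ C hC2 T hT X hX I hI
end

section
/- Let Q be a unital C*-algebra generated by the entries of a 3×3 biunitary matrix u (both u and uᵗ unitary) satisfying the half-liberation relations a b* c = c b* a for all a, b, c ∈ {u_{ij}}. Then the *-subalgebra generated by the products u_{ij}* u_{kl} is commutative; i.e. (u_{ij}* u_{kl})(u_{pq}* u_{rs}) = (u_{pq}* u_{rs})(u_{ij}* u_{kl}) for all indices. -/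
/-- For a `3×3` biunitary matrix `u` over a unital C*-algebra satisfying the
half-liberation relations `a b* c = c b* a` for entries `a, b, c` of `u`, the
products `u_{ij}* u_{kl}` pairwise commute (the projective version is commutative). -/
theorem half_liberated_projective_commutative {Q : Type*} [NormedRing Q] [StarRing Q]
    [NormedAlgebra ℂ Q] [CStarRing Q] [CompleteSpace Q] [StarModule ℂ Q]
    (u : Matrix (Fin 3) (Fin 3) Q)
    (hu1 : u * u.conjTranspose = 1) (hu2 : u.conjTranspose * u = 1)
    (hu3 : u.transpose * u.transpose.conjTranspose = 1)
    (hu4 : u.transpose.conjTranspose * u.transpose = 1)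
    (hhalf : ∀ a b c : Q, (∃ i j, a = u i j) → (∃ i j, b = u i j) →
      (∃ i j, c = u i j) → a * star b * c = c * star b * a) :
    ∀ i j k l p r s t : Fin 3,
      (star (u i j) * u k l) * (star (u p r) * u s t)
        = (star (u p r) * u s t) * (star (u i j) * u k l) := by
  intro i j k l p r s t
  set a := u i j with ha
  set b := u k l with hb
  set c := u p r with hc
  set d := u s t with hd
  have h1 : star a * b * star c = star c * b * star a := by
    have h := congrArg star (hhalf a b c ⟨i, j, rfl⟩ ⟨k, l, rfl⟩ ⟨p, r, rfl⟩)
    simpa [star_mul, mul_assoc] using h.symm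
  have h2 : b * star a * d = d * star a * b :=
    hhalf b a d ⟨k, l, rfl⟩ ⟨i, j, rfl⟩ ⟨s, t, rfl⟩
  calc (star a * b) * (star c * d)
      = (star a * b * star c) * d := by simp only [mul_assoc]
    _ = (star c * b * star a) * d := by rw [h1]
    _ = star c * (b * star a * d) := by simp only [mul_assoc]
    _ = star c * (d * star a * b) := by rw [h2]
    _ = (star c * d) * (star a * b) := by simp only [mul_assoc]
end

section
/- Let u = (u_{ij}) be an N×N biunitary matrix with entries in a unital *-algebra Q. Then the family of relations Σ_{v=1}^{N} u*_{vj} u_{ki} u*_{ls} u_{vr} = δ_{jr} u*_{ls} u_{ki} (for all i,j,k,l,r,s) is equivalent to the family of relations u_{jk} u*_{j'k'} u_{j''k''} = u_{j''k''} u*_{j'k'} u_{jk} (for all index pairs). -/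
/-- For an `N×N` biunitary matrix `u` over a unital `*`-algebra, the family of
relations `Σᵥ u*_{vj} u_{ki} u*_{ls} u_{vr} = δ_{jr} u*_{ls} u_{ki}` is equivalent to
the half-liberation relations `u_{jk} u*_{j'k'} u_{j''k''} = u_{j''k''} u*_{j'k'} u_{jk}`. -/
theorem quartic_relation_iff_half_liberation {N : ℕ} {Q : Type*} [Ring Q] [StarRing Q]
    (u : Matrix (Fin N) (Fin N) Q)
    (hu1 : u * u.conjTranspose = 1) (hu2 : u.conjTranspose * u = 1)
    (hu3 : u.transpose * u.transpose.conjTranspose = 1)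
    (hu4 : u.transpose.conjTranspose * u.transpose = 1) :
    (∀ i j k l r s : Fin N,
      ∑ v, star (u v j) * u k i * star (u l s) * u v r
        = if j = r then star (u l s) * u k i else 0) ↔
    (∀ j k j' k' j'' k'' : Fin N,
      u j k * star (u j' k') * u j'' k'' = u j'' k'' * star (u j' k') * u j k) := by
  have h1 : ∀ a v, ∑ j, u a j * star (u v j) = if a = v then 1 else 0 := by
    intro a v
    have := congrFun (congrFun hu1 a) v
    simpa [Matrix.mul_apply, Matrix.conjTranspose_apply, Matrix.one_apply] using this
  have h2 : ∀ j r, ∑ v, star (u v j) * u v r = if j = r then 1 else 0 := by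
    intro j r
    have := congrFun (congrFun hu2 j) r
    simpa [Matrix.mul_apply, Matrix.conjTranspose_apply, Matrix.one_apply] using this
  constructor
  · intro h j k j' k' j'' k''
    have e3 : ∑ a, u j'' a * ∑ v, star (u v a) * u j k * star (u j' k') * u v k''
        = u j k * star (u j' k') * u j'' k'' := by
      calc ∑ a, u j'' a * ∑ v, star (u v a) * u j k * star (u j' k') * u v k''
          = ∑ v, (∑ a, u j'' a * star (u v a)) * (u j k * star (u j' k') * u v k'') := by
            simp_rw [Finset.mul_sum]
            rw [Finset.sum_comm]
            refine Finset.sum_congr rfl fun v _ => ?_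
            rw [Finset.sum_mul]
            refine Finset.sum_congr rfl fun a _ => ?_
            simp [mul_assoc]
        _ = u j k * star (u j' k') * u j'' k'' := by
            simp_rw [h1]
            simp
    have e1 : ∑ a, u j'' a * ∑ v, star (u v a) * u j k * star (u j' k') * u v k''
        = u j'' k'' * (star (u j' k') * u j k) := by
      calc ∑ a, u j'' a * ∑ v, star (u v a) * u j k * star (u j' k') * u v k''
          = ∑ a, u j'' a * (if a = k'' then star (u j' k') * u j k else 0) :=
            Finset.sum_congr rfl fun a _ => by rw [h k a j j' k'' k']
        _ = u j'' k'' * (star (u j' k') * u j k) := by simp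
    rw [← e3, e1, ← mul_assoc]
  · intro h i j k l r s
    have e : ∀ v, star (u v j) * u k i * star (u l s) * u v r
        = star (u l s) * u k i * (star (u v j) * u v r) := by
      intro v
      have h' := congrArg star (h l s k i v j)
      simp only [star_mul, star_star] at h'
      have h'' := congrArg (· * u v r) h'
      simpa [mul_assoc] using h''
    calc ∑ v, star (u v j) * u k i * star (u l s) * u v r
        = ∑ v, star (u l s) * u k i * (star (u v j) * u v r) :=
          Finset.sum_congr rfl fun v _ => e v
      _ = star (u l s) * u k i * ∑ v, star (u v j) * u v r := by rw [Finset.mul_sum]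
      _ = if j = r then star (u l s) * u k i else 0 := by
          rw [h2]
          split <;> simp [mul_assoc]
end

section
/- Let H₁ be a complex Hilbert space, H₂ a finite-dimensional complex Hilbert space, Q a unital C*-algebra, and U ∈ Mdim(H₂)(Q) ≅ 𝓑(H₂) ⊗ Q a unitary whose transpose (in some orthonormal basis of H₂) is also unitary (biunitary). Set Û := 1_{H₁} ⊗ U acting on (H₁ ⊗ H₂) ⊗ Q. Then for every trace-class operator L on H₁ ⊗ H₂, (Tr_{H₁ ⊗ H₂} ⊗ id)(Û (L ⊗ 1_Q) Û*) = Tr(L) · 1_Q. -/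
/-!
Summing over the row index `a` first, the coefficient of `c j k` becomes
`∑ a, U a j * star (U a k) = (Uᵀ * Uᵀᴴ) j k = δ j k`; this is where unitarity of the
transpose enters, and only the diagonal of `c`, i.e. its trace, survives.
-/

namespace Matrix

variable {n Q : Type*} [Fintype n] [DecidableEq n] [Semiring Q] [StarRing Q]

theorem sum_mul_star_of_transpose_mul_conjTranspose_eq_one {U : Matrix n n Q}
    (hU : Uᵀ * Uᵀᴴ = 1) (j k : n) :
    ∑ a, U a j * star (U a k) = if j = k then 1 else 0 := by
  simpa [mul_apply, one_apply] using congrFun (congrFun hU j) k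

theorem sum_smul_mul_star_eq_trace_smul_one {R : Type*} [CommSemiring R] [Module R Q]
    (c : Matrix n n R) {U : Matrix n n Q} (hU : Uᵀ * Uᵀᴴ = 1) :
    ∑ a, ∑ j, ∑ k, c j k • (U a j * star (U a k)) = c.trace • (1 : Q) := by
  calc ∑ a, ∑ j, ∑ k, c j k • (U a j * star (U a k))
      = ∑ j, ∑ k, c j k • ∑ a, U a j * star (U a k) := by
        rw [Finset.sum_comm]
        refine Finset.sum_congr rfl fun j _ => ?_
        rw [Finset.sum_comm]
        simp only [Finset.smul_sum]
    _ = ∑ j, c j j • (1 : Q) := by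
        simp [sum_mul_star_of_transpose_mul_conjTranspose_eq_one hU]
    _ = c.trace • (1 : Q) := (Finset.sum_smul ..).symm

end Matrix

theorem trace_invariance_one_tensor_U_general
    {H₁ : Type*} [NormedAddCommGroup H₁] [InnerProductSpace ℂ H₁]
    {ι : Type*} (e : HilbertBasis ι ℂ H₁)
    {Q : Type*} [NormedRing Q] [StarRing Q] [NormedAlgebra ℂ Q]
    {m : ℕ} (L : Matrix (Fin m) (Fin m) (H₁ →L[ℂ] H₁))
    (U : Matrix (Fin m) (Fin m) Q)
    (hU3 : U.transpose * U.transpose.conjTranspose = 1) :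
    ∑ a, ∑ j, ∑ k, (∑' i : ι, (inner ℂ (e i) (L j k (e i)) : ℂ)) • (U a j * star (U a k))
      = (∑ j, ∑' i : ι, (inner ℂ (e i) (L j j (e i)) : ℂ)) • (1 : Q) :=
  Matrix.sum_smul_mul_star_eq_trace_smul_one
    (Matrix.of fun j k => ∑' i : ι, (inner ℂ (e i) (L j k (e i)) : ℂ)) hU3

/-- **Invariance of the trace under `1 ⊗ U`.**  With `H₂ ≅ ℂᵐ` finite dimensional,
identify operators on `H₁ ⊗ H₂` with `m×m` matrices `L` of operators on `H₁` (entries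
trace class, with traces computed along a Hilbert basis `e` of `H₁`), and `1 ⊗ U`
with the matrix `(1 ⊗ U_{ij})`.  If `U` is biunitary over the C*-algebra `Q`, then
`(Tr_{H₁⊗H₂} ⊗ id)(Û (L ⊗ 1) Û*) = Tr(L) · 1_Q`: the `(a,a)`-entry of `Û (L⊗1) Û*`
is `Σ_{j,k} L_{jk} ⊗ U_{aj} U_{ak}*`, and its partial trace sums to `Tr(L) · 1`. -/
theorem trace_invariance_one_tensor_U
    {H₁ : Type*} [NormedAddCommGroup H₁] [InnerProductSpace ℂ H₁] [CompleteSpace H₁]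
    {ι : Type*} (e : HilbertBasis ι ℂ H₁)
    {Q : Type*} [NormedRing Q] [StarRing Q] [NormedAlgebra ℂ Q] [CStarRing Q]
    [CompleteSpace Q] [StarModule ℂ Q]
    {m : ℕ} (L : Matrix (Fin m) (Fin m) (H₁ →L[ℂ] H₁))
    (hL : ∀ j k, Summable fun i : ι => (inner ℂ (e i) (L j k (e i)) : ℂ))
    (U : Matrix (Fin m) (Fin m) Q)
    (hU1 : U * U.conjTranspose = 1) (hU2 : U.conjTranspose * U = 1)
    (hU3 : U.transpose * U.transpose.conjTranspose = 1)
    (hU4 : U.transpose.conjTranspose * U.transpose = 1) :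
    ∑ a, ∑ j, ∑ k, (∑' i : ι, (inner ℂ (e i) (L j k (e i)) : ℂ)) • (U a j * star (U a k))
      = (∑ j, ∑' i : ι, (inner ℂ (e i) (L j j (e i)) : ℂ)) • (1 : Q) :=
  trace_invariance_one_tensor_U_general e L U hU3
end

section
/- Let Q be a unital *-algebra, x₀ a unitary in Q, and T₁,…,Tₙ ∈ M₃(Q) biunitary matrices. Suppose the relations (T_m)_{ij}(T_m)*_{i'j'}(T_m)_{i''j''} = (T_m)_{i''j''}(T_m)*_{i'j'}(T_m)_{ij} hold for each m and all indices. Then the elements (T_m*)_{ij}(T_m)_{kl} generate a commutative *-subalgebra of Q, and for each m the matrix with entries ((T_m*)_{ij}(T_m)_{kl}) defines a trace-preserving 'magic-like' coefficient system: Σ_v (T_m*)_{vj}(T_m)_{ki}(T_m*)_{ls}(T_m)_{vr} = δ_{jr} (T_m*)_{ls}(T_m)_{ki}. -/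
/-- Let `x₀` be a unitary and `T₁,…,Tₙ` biunitary `3×3` matrices over a unital
`*`-algebra satisfying the half-liberation relations
`(Tₘ)_{ij} (Tₘ)*_{i'j'} (Tₘ)_{i''j''} = (Tₘ)_{i''j''} (Tₘ)*_{i'j'} (Tₘ)_{ij}`.
Then the elements `(Tₘ*)_{ij} (Tₘ)_{kl}` generate a commutative `*`-subalgebra
(pairwise commutation of the generators) and satisfy the quartic identity
`Σᵥ (Tₘ*)_{vj} (Tₘ)_{ki} (Tₘ*)_{ls} (Tₘ)_{vr} = δ_{jr} (Tₘ*)_{ls} (Tₘ)_{ki}`. -/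
theorem half_liberated_family_relations {n : ℕ} {Q : Type*} [Ring Q] [StarRing Q]
    (x₀ : Q) (hx₀ : star x₀ * x₀ = 1 ∧ x₀ * star x₀ = 1)
    (T : Fin n → Matrix (Fin 3) (Fin 3) Q)
    (hbi : ∀ m, T m * (T m).conjTranspose = 1 ∧ (T m).conjTranspose * T m = 1 ∧
      (T m).transpose * (T m).transpose.conjTranspose = 1 ∧
      (T m).transpose.conjTranspose * (T m).transpose = 1)
    (hhalf : ∀ m (i j i' j' i'' j'' : Fin 3),
      T m i j * star (T m i' j') * T m i'' j''
        = T m i'' j'' * star (T m i' j') * T m i j) :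
    (∀ m (i j k l p q r s : Fin 3),
      (star (T m i j) * T m k l) * (star (T m p q) * T m r s)
        = (star (T m p q) * T m r s) * (star (T m i j) * T m k l)) ∧
    (∀ m (i j k l r s : Fin 3),
      ∑ v, star (T m v j) * T m k i * star (T m l s) * T m v r
        = if j = r then star (T m l s) * T m k i else 0) := by
  have hstar : ∀ m (i j i' j' i'' j'' : Fin 3),
      star (T m i j) * T m i' j' * star (T m i'' j'')
        = star (T m i'' j'') * T m i' j' * star (T m i j) := by
    intro m i j i' j' i'' j''
    have h := congrArg star (hhalf m i'' j'' i' j' i j)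
    simpa [star_mul, mul_assoc] using h
  constructor
  · intro m i j k l p q r s
    calc (star (T m i j) * T m k l) * (star (T m p q) * T m r s)
        = star (T m i j) * (T m k l * star (T m p q) * T m r s) := by
          simp [mul_assoc]
      _ = star (T m i j) * (T m r s * star (T m p q) * T m k l) := by
          rw [hhalf m k l p q r s]
      _ = (star (T m i j) * T m r s * star (T m p q)) * T m k l := by
          simp [mul_assoc]
      _ = (star (T m p q) * T m r s * star (T m i j)) * T m k l := by
          rw [hstar m i j r s p q]
      _ = (star (T m p q) * T m r s) * (star (T m i j) * T m k l) := by
          simp [mul_assoc]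
  · intro m i j k l r s
    have hsum : ∑ v, star (T m v j) * T m v r = if j = r then (1 : Q) else 0 := by
      have h2 := (hbi m).2.1
      have h3 := congrFun (congrFun h2 j) r
      simpa [Matrix.mul_apply, Matrix.conjTranspose_apply, Matrix.one_apply] using h3
    calc ∑ v, star (T m v j) * T m k i * star (T m l s) * T m v r
        = ∑ v, (star (T m v j) * T m v r) * (star (T m l s) * T m k i) := by
          refine Finset.sum_congr rfl fun v _ => ?_
          have h := hhalf m k i l s v r
          calc star (T m v j) * T m k i * star (T m l s) * T m v r
              = star (T m v j) * (T m k i * star (T m l s) * T m v r) := by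
                simp [mul_assoc]
            _ = star (T m v j) * (T m v r * star (T m l s) * T m k i) := by rw [h]
            _ = (star (T m v j) * T m v r) * (star (T m l s) * T m k i) := by
                simp [mul_assoc]
      _ = (∑ v, star (T m v j) * T m v r) * (star (T m l s) * T m k i) := by
          rw [Finset.sum_mul]
      _ = (if j = r then (1 : Q) else 0) * (star (T m l s) * T m k i) := by rw [hsum]
      _ = if j = r then star (T m l s) * T m k i else 0 := by
          split <;> simp [mul_assoc]
end
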